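/- Let tokens Y_1,…,Y_N be generated sequentially by model B with conditional laws p_n^B, and evaluated by model A with conditional laws p_n^A, where there exists ε ∈ (0,1/2] such that all nonzero conditional probabilities of both models are at least ε. Define l_A = -(1/N)∑_n log p_n^A(Y_n) and the average cross-entropy h_N(B,A) = (1/N)∑_n H(p_n^B, p_n^A). Then there is a universal constant c_3 > 0 such that for all t > 0, P(|l_A - h_N(B,A)| ≥ t) ≤ 2 exp(-(N t/(-c_3 log ε)) min(1, t/(-c_3 log ε))). -/

import Mathlib

/-- Probability of the token sequence `y` under the sequential generator `pB`. -/
noncomputable def seqProb {X : Type*} (pB : List X → X → ℝ) {N : ℕ}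
    (y : Fin N → X) : ℝ :=
  ∏ n : Fin N, pB ((List.ofFn y).take n.val) (y n)

/-- Log-perplexity of the sequence `y` under the evaluator model `pA`. -/
noncomputable def logPerp {X : Type*} (pA : List X → X → ℝ) {N : ℕ}
    (y : Fin N → X) : ℝ :=
  -((1 : ℝ) / N) * ∑ n : Fin N, Real.log (pA ((List.ofFn y).take n.val) (y n))

/-- Cross-entropy `H(pb, pa) = -∑ pb(x) log pa(x)`. -/
noncomputable def crossEnt {X : Type*} [Fintype X] (pb pa : X → ℝ) : ℝ :=
  -∑ x, pb x * Real.log (pa x)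

/-- Average cross-entropy `h_N(B,A)` along the sequence `y`. -/
noncomputable def avgCrossEntropy {X : Type*} [Fintype X] (pB pA : List X → X → ℝ)
    {N : ℕ} (y : Fin N → X) : ℝ :=
  ((1 : ℝ) / N) * ∑ n : Fin N,
    crossEnt (pB ((List.ofFn y).take n.val)) (pA ((List.ofFn y).take n.val))

/-!
Under `B` the increments `-log p_n^A(Y_n) - H(p_n^B, p_n^A)` form a martingale difference
sequence, and they are bounded by `L = -log ε` because every probability of `A` is `0` or at
least `ε` (and `log 0 = 0`). Each has conditional moment generating function at most
`exp (λ² L²)` for `|λ| L ≤ 1`, so the tower property bounds the moment generating function of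
`N (l_A - h_N)` by `exp (N λ² L²)`. A two-sided Chernoff bound with `λ = min 1 (t / 2L) / L`
then gives the claim with `c₃ = 2`.
-/

open Finset Real

lemma exp_le_one_add_add_sq {u : ℝ} (hu : |u| ≤ 1) : exp u ≤ 1 + u + u ^ 2 := by
  linarith [(abs_le.1 (abs_exp_sub_one_sub_id_le hu)).2]

section Moments

variable {ι : Type*} [Fintype ι] {p : ι → ℝ}

lemma sum_mul_exp_le_exp_sq_of_sum_mul_eq_zero {v : ι → ℝ} {a : ℝ}
    (hp : ∀ i, 0 ≤ p i) (hp1 : ∑ i, p i = 1) (hv0 : ∑ i, p i * v i = 0)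
    (hva : ∀ i, |v i| ≤ a) (ha : a ≤ 1) :
    ∑ i, p i * exp (v i) ≤ exp (a ^ 2) := by
  have hsq : ∑ i, p i * v i ^ 2 ≤ a ^ 2 :=
    calc ∑ i, p i * v i ^ 2 ≤ ∑ i, p i * a ^ 2 := sum_le_sum fun i _ =>
          mul_le_mul_of_nonneg_left (sq_le_sq' (abs_le.1 (hva i)).1 (abs_le.1 (hva i)).2) (hp i)
      _ = a ^ 2 := by rw [← sum_mul, hp1, one_mul]
  calc ∑ i, p i * exp (v i) ≤ ∑ i, p i * (1 + v i + v i ^ 2) := by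
        gcongr with i
        · exact hp i
        · exact exp_le_one_add_add_sq ((hva i).trans ha)
    _ = ∑ i, p i + ∑ i, p i * v i + ∑ i, p i * v i ^ 2 := by
        simp only [mul_add, mul_one, sum_add_distrib]
    _ ≤ 1 + a ^ 2 := by rw [hp1, hv0]; linarith
    _ ≤ exp (a ^ 2) := by linarith [add_one_le_exp (a ^ 2)]

lemma sum_mul_exp_centered_le {g : ι → ℝ} {L s : ℝ}
    (hp : ∀ i, 0 ≤ p i) (hp1 : ∑ i, p i = 1) (hg : ∀ i, g i ∈ Set.Icc 0 L)
    (hs : |s| * L ≤ 1) :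
    ∑ i, p i * exp (s * (g i - ∑ j, p j * g j)) ≤ exp (s ^ 2 * L ^ 2) := by
  set μ := ∑ j, p j * g j
  have hμ : μ ∈ Set.Icc 0 L := by
    constructor
    · exact sum_nonneg fun i _ => mul_nonneg (hp i) (hg i).1
    · calc μ ≤ ∑ j, p j * L := sum_le_sum fun j _ => mul_le_mul_of_nonneg_left (hg j).2 (hp j)
        _ = L := by rw [← sum_mul, hp1, one_mul]
  have hcentred : ∑ i, p i * (s * (g i - μ)) = 0 := by
    simp only [mul_sub, mul_left_comm _ s, sum_sub_distrib, ← mul_sum, ← sum_mul, hp1]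
    ring
  have hbound : ∀ i, |s * (g i - μ)| ≤ |s| * L := fun i => by
    rw [abs_mul]
    gcongr
    exact abs_sub_le_iff.2 ⟨by linarith [(hg i).2, hμ.1], by linarith [(hg i).1, hμ.2]⟩
  simpa [mul_pow] using
    sum_mul_exp_le_exp_sq_of_sum_mul_eq_zero hp hp1 hcentred hbound hs

lemma sum_ite_le_abs_le_exp_mul_mgf {w S : ι → ℝ} {a s : ℝ} (hw : ∀ i, 0 ≤ w i)
    (hs : 0 ≤ s) :
    (∑ i, if a ≤ |S i| then w i else 0) ≤
      exp (-(s * a)) * (∑ i, w i * exp (s * S i) + ∑ i, w i * exp (-s * S i)) := by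
  rw [mul_add, mul_sum, mul_sum, ← sum_add_distrib]
  refine sum_le_sum fun i _ => ?_
  have hexp : exp (-(s * a)) * (w i * exp (s * S i)) + exp (-(s * a)) * (w i * exp (-s * S i))
      = w i * (exp (s * (S i - a)) + exp (s * (-S i - a))) := by
    simp only [mul_sub, exp_sub, neg_mul, mul_neg, exp_neg]
    ring
  rw [hexp]
  split_ifs with ha
  · -- one of the two exponents is nonnegative
    have hone : 1 ≤ exp (s * (S i - a)) + exp (s * (-S i - a)) := by
      rcases le_abs'.1 ha with h | h
      · linarith [one_le_exp (mul_nonneg hs (by linarith : 0 ≤ -S i - a)),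
          exp_pos (s * (S i - a))]
      · linarith [one_le_exp (mul_nonneg hs (by linarith : 0 ≤ S i - a)),
          exp_pos (s * (-S i - a))]
    nlinarith [hw i]
  · exact mul_nonneg (hw i) (by positivity)

end Moments

section Sequences

variable {X : Type*} [Fintype X]

omit [Fintype X] in
lemma ofFn_cons_take_succ {N : ℕ} (x : X) (z : Fin N → X) (h : List X) (n : Fin N) :
    h ++ (List.ofFn (Fin.cons x z : Fin (N + 1) → X)).take (n.val + 1) =
      (h ++ [x]) ++ (List.ofFn z).take n.val := by
  simp [List.ofFn_succ, List.take_succ_cons, List.append_assoc]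

lemma sum_prod_prefix_le_pow (F : List X → X → ℝ) {K : ℝ}
    (hF : ∀ h x, 0 ≤ F h x) (hK : ∀ h, ∑ x, F h x ≤ K) (hK0 : 0 ≤ K) :
    ∀ (N : ℕ) (h : List X),
      ∑ y : Fin N → X, ∏ n : Fin N, F (h ++ (List.ofFn y).take n.val) (y n) ≤ K ^ N := by
  intro N
  induction N with
  | zero => simp
  | succ N ih =>
    intro h
    rw [← (Fin.consEquiv fun _ => X).sum_comp, Fintype.sum_prod_type]
    calc ∑ x, ∑ z : Fin N → X, ∏ n : Fin (N + 1),
            F (h ++ (List.ofFn (Fin.cons x z : Fin (N + 1) → X)).take n.val)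
              ((Fin.cons x z : Fin (N + 1) → X) n)
        = ∑ x, F h x * ∑ z : Fin N → X,
            ∏ n : Fin N, F ((h ++ [x]) ++ (List.ofFn z).take n.val) (z n) := by
          simp only [Fin.prod_univ_succ, Fin.cons_zero, Fin.cons_succ, Fin.val_zero,
            List.take_zero, List.append_nil, Fin.val_succ, ofFn_cons_take_succ, mul_sum]
      _ ≤ ∑ x, F h x * K ^ N := by gcongr with x; exacts [hF h x, ih _]
      _ ≤ K ^ (N + 1) := by
          rw [← sum_mul, pow_succ']
          exact mul_le_mul_of_nonneg_right (hK h) (pow_nonneg hK0 N)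

lemma sum_seqProb_mul_exp_le_pow (pB φ : List X → X → ℝ) {K : ℝ}
    (hpB : ∀ h x, 0 ≤ pB h x) (hK : ∀ h, ∑ x, pB h x * exp (φ h x) ≤ K) (hK0 : 0 ≤ K)
    (N : ℕ) :
    ∑ y : Fin N → X, seqProb pB y * exp (∑ n : Fin N, φ ((List.ofFn y).take n.val) (y n))
      ≤ K ^ N := by
  simpa [seqProb, exp_sum, prod_mul_distrib] using
    sum_prod_prefix_le_pow (fun h x => pB h x * exp (φ h x))
      (fun h x => mul_nonneg (hpB h x) (exp_pos _).le) hK hK0 N []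

lemma natCast_mul_logPerp_sub_avgCrossEntropy (pA pB : List X → X → ℝ) {N : ℕ} (hN : 0 < N)
    (y : Fin N → X) :
    N * (logPerp pA y - avgCrossEntropy pB pA y) =
      ∑ n : Fin N, (-log (pA ((List.ofFn y).take n.val) (y n)) -
        crossEnt (pB ((List.ofFn y).take n.val)) (pA ((List.ofFn y).take n.val))) := by
  have hN' : (N : ℝ) ≠ 0 := by positivity
  simp only [logPerp, avgCrossEntropy, sum_sub_distrib, sum_neg_distrib]
  field_simp

lemma sum_seqProb_ite_le_abs_logPerp_sub_le (pA pB : List X → X → ℝ) {L s t : ℝ}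
    (hB : ∀ h, (∀ x, 0 ≤ pB h x) ∧ ∑ x, pB h x = 1)
    (hsurprisal : ∀ h x, -log (pA h x) ∈ Set.Icc 0 L)
    {N : ℕ} (hN : 0 < N) (hs : 0 ≤ s) (hsL : s * L ≤ 1) :
    (∑ y : Fin N → X,
        if t ≤ |logPerp pA y - avgCrossEntropy pB pA y| then seqProb pB y else 0)
      ≤ 2 * exp (N * (s ^ 2 * L ^ 2 - s * t)) := by
  set S : (Fin N → X) → ℝ := fun y => N * (logPerp pA y - avgCrossEntropy pB pA y)
  have hNpos : (0 : ℝ) < N := by exact_mod_cast hN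
  have hevent : ∀ y : Fin N → X,
      (t ≤ |logPerp pA y - avgCrossEntropy pB pA y|) ↔ N * t ≤ |S y| := fun y => by
    simp only [S, abs_mul, Nat.abs_cast]
    exact (mul_le_mul_iff_right₀ hNpos).symm
  have hce : ∀ h, crossEnt (pB h) (pA h) = ∑ x, pB h x * -log (pA h x) := fun h => by
    simp [crossEnt]
  have hmgf : ∀ r : ℝ, |r| * L ≤ 1 →
      ∑ y, seqProb pB y * exp (r * S y) ≤ exp (r ^ 2 * L ^ 2) ^ N := fun r hr => by
    simp only [S, natCast_mul_logPerp_sub_avgCrossEntropy pA pB hN, mul_sum]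
    refine sum_seqProb_mul_exp_le_pow pB
      (fun h x => r * (-log (pA h x) - crossEnt (pB h) (pA h))) (fun h x => (hB h).1 x)
      (fun h => ?_)
      (exp_pos _).le N
    rw [hce]
    exact sum_mul_exp_centered_le (hB h).1 (hB h).2 (hsurprisal h) hr
  have hseq : ∀ y : Fin N → X, 0 ≤ seqProb pB y := fun y =>
    prod_nonneg fun n _ => (hB _).1 _
  simp_rw [hevent]
  calc (∑ y, if N * t ≤ |S y| then seqProb pB y else 0)
      ≤ exp (-(s * (N * t))) *
          (∑ y, seqProb pB y * exp (s * S y) + ∑ y, seqProb pB y * exp (-s * S y)) :=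
        sum_ite_le_abs_le_exp_mul_mgf hseq hs
    _ ≤ exp (-(s * (N * t))) * (exp (s ^ 2 * L ^ 2) ^ N + exp ((-s) ^ 2 * L ^ 2) ^ N) := by
        gcongr
        · exact hmgf s (by rwa [abs_of_nonneg hs])
        · exact hmgf (-s) (by rwa [abs_neg, abs_of_nonneg hs])
    _ = 2 * exp (N * (s ^ 2 * L ^ 2 - s * t)) := by
        rw [neg_sq, ← exp_nat_mul, ← two_mul, mul_left_comm, ← exp_add]
        ring_nf

end Sequences

lemma neg_log_mem_Icc_of_eq_zero_or_le {ε q : ℝ} (hε : 0 < ε) (hε1 : ε ≤ 1) (hq1 : q ≤ 1)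
    (hq : q = 0 ∨ ε ≤ q) : -log q ∈ Set.Icc 0 (-log ε) := by
  rcases hq with rfl | hεq
  · simpa using log_nonpos hε.le hε1
  · exact ⟨by linarith [log_nonpos (hε.trans_le hεq).le hq1],
      by linarith [log_le_log hε hεq]⟩

/-- Theorem 1(b): there is a universal constant `c₃ > 0` such that if the
text is generated by `B` and evaluated by `A`, both with all nonzero
conditional probabilities at least `ε ∈ (0,1/2]`, then for all `t > 0`,
`P(|l_A - h_N(B,A)| ≥ t) ≤ 2 exp(-(N t/(-c₃ log ε)) min(1, t/(-c₃ log ε)))`. -/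
theorem logPerp_concentration_cross_model :
    ∃ c3 : ℝ, 0 < c3 ∧
      ∀ (X : Type) [Fintype X], ∀ (pA pB : List X → X → ℝ) (ε : ℝ),
        0 < ε → ε ≤ 1 / 2 →
        (∀ h : List X, (∀ x, 0 ≤ pA h x) ∧ ∑ x, pA h x = 1) →
        (∀ h : List X, (∀ x, 0 ≤ pB h x) ∧ ∑ x, pB h x = 1) →
        (∀ h : List X, ∀ x, pA h x = 0 ∨ ε ≤ pA h x) →
        (∀ h : List X, ∀ x, pB h x = 0 ∨ ε ≤ pB h x) →
        ∀ N : ℕ, 0 < N → ∀ t : ℝ, 0 < t →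
          (∑ y : Fin N → X,
              if t ≤ |logPerp pA y - avgCrossEntropy pB pA y| then seqProb pB y else 0)
            ≤ 2 * Real.exp (-(N * t / (-c3 * Real.log ε)) *
                min 1 (t / (-c3 * Real.log ε))) := by
  refine ⟨2, two_pos, fun X _ pA pB ε hε hε2 hA hB hAε _ N hN t ht => ?_⟩
  set L := -log ε
  have hL : 0 < L := neg_pos.2 (log_neg hε (by linarith))
  have hpA1 : ∀ h x, pA h x ≤ 1 := fun h x =>
    (hA h).2 ▸ single_le_sum (fun z _ => (hA h).1 z) (mem_univ x)
  set m := min 1 (t / (2 * L))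
  have hm0 : 0 ≤ m := le_min zero_le_one (by positivity)
  have hmt : m ≤ t / (2 * L) := min_le_right _ _
  have htail := sum_seqProb_ite_le_abs_logPerp_sub_le pA pB (t := t) hB
    (fun h x => neg_log_mem_Icc_of_eq_zero_or_le hε (by linarith) (hpA1 h x) (hAε h x)) hN
    (div_nonneg hm0 hL.le) (by rw [div_mul_cancel₀ _ hL.ne']; exact min_le_left _ _)
  refine htail.trans (mul_le_mul_of_nonneg_left (exp_le_exp.2 ?_) two_pos.le)
  rw [show -2 * log ε = 2 * L by ring]
  -- with `s = m / L` the exponent falls short of the target by `N m (t / 2L - m) ≥ 0`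
  have hgap : (N : ℝ) * ((m / L) ^ 2 * L ^ 2 - m / L * t) =
      -(N * t / (2 * L)) * m - N * m * (t / (2 * L) - m) := by
    field_simp
    ring
  have : 0 ≤ (N : ℝ) * m * (t / (2 * L) - m) := by
    have := sub_nonneg.2 hmt
    positivity
  linarith
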